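/- For all (k1,k2) ∈ ℤ²_{≥0} and ℓ ≥ 0: k1!·k2!·C(k1,k2,ℓ) = ∑_{0≤i≤k1, 0≤j≤k2} binom(k1,i)·binom(k2,j)·(-1)^{k1+k2-i-j}·(i·x + j·y + z)^ℓ, as polynomials in ℤ[x,y,z]. -/

import Mathlib

/-- Stirling numbers of the second kind. -/
def stirling2 : ℕ → ℕ → ℕ
  | 0, 0 => 1
  | 0, _ + 1 => 0
  | _ + 1, 0 => 0
  | n + 1, k + 1 => stirling2 n k + (k + 1) * stirling2 n (k + 1)

open MvPolynomial in
/-- The polynomial `C(k1,k2,ℓ) = ∑_{i1 ≥ k1, i2 ≥ k2, i1+i2 ≤ ℓ}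
binom(ℓ,i1) binom(ℓ-i1,i2) S(i1,k1) S(i2,k2) x^{i1} y^{i2} z^{ℓ-i1-i2}` in `ℤ[x,y,z]`
(the conditions `i1 ≥ k1`, `i2 ≥ k2` are automatic since `S(i,k) = 0` for `i < k`). -/
noncomputable def Cpoly (k1 k2 l : ℕ) : MvPolynomial (Fin 3) ℤ :=
  ∑ i1 ∈ Finset.range (l + 1), ∑ i2 ∈ Finset.range (l + 1 - i1),
    (MvPolynomial.C ((l.choose i1 * (l - i1).choose i2
        * stirling2 i1 k1 * stirling2 i2 k2 : ℕ) : ℤ)) *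
      X 0 ^ i1 * X 1 ^ i2 * X 2 ^ (l - i1 - i2)

open MvPolynomial in
/-- `A_{ij} = i·x + j·y + z`. -/
noncomputable def Apoly (i j : ℕ) : MvPolynomial (Fin 3) ℤ :=
  (i : MvPolynomial (Fin 3) ℤ) * X 0 + (j : MvPolynomial (Fin 3) ℤ) * X 1 + X 2

/-! Expanding `(i x + j y + z)^ℓ` by the trinomial theorem, the coefficient of
`x^a y^b z^(ℓ-a-b)` in the alternating sum is `binom(ℓ,a) binom(ℓ-a,b)` times a double
alternating sum that factors as `Δ^{k1}(t^a)(0) · Δ^{k2}(t^b)(0)`. The forward difference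
`Δ^k(t^n)(0)` equals `k! S(n,k)`: it satisfies the Stirling recurrence because
`Δ^{k+1}(t^{n+1})(0) = (k+1) Δ^k((t+1)^n)(0)` (from `i binom(k+1,i) = (k+1) binom(k,i-1)`)
and `(t+1)^n = Δ(t^n) + t^n`. -/

open Finset Nat fwdDiff

theorem stirling2_eq_stirlingSecond : stirling2 = stirlingSecond := by
  funext n k
  induction n generalizing k with
  | zero => cases k <;> rfl
  | succ n ih => cases k <;> simp [stirling2, stirlingSecond_succ_succ, ih, add_comm]

theorem add_add_pow {R : Type*} [CommSemiring R] (u v w : R) (l : ℕ) :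
    (u + v + w) ^ l = ∑ a ∈ range (l + 1), ∑ b ∈ range (l + 1 - a),
      (l.choose a * (l - a).choose b : R) * u ^ a * v ^ b * w ^ (l - a - b) := by
  rw [add_assoc, add_pow]
  refine sum_congr rfl fun a ha => ?_
  rw [add_pow, ← Nat.sub_add_comm (mem_range_succ_iff.mp ha), mul_sum, sum_mul]
  refine sum_congr rfl fun b _ => ?_
  ring

section CommRing

variable {R : Type*} [CommRing R]

theorem fwdDiff_iter_eq_sum_choose (f : ℕ → R) (k : ℕ) :
    Δ_[1] ^[k] f 0 = ∑ i ∈ range (k + 1), (-1) ^ (k - i) * k.choose i * f i := by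
  simp [fwdDiff_iter_eq_sum_shift, zsmul_eq_mul]

theorem fwdDiff_iter_succ_pow_succ (n k : ℕ) :
    Δ_[1] ^[k + 1] (fun x : ℕ => (x : R) ^ (n + 1)) 0 =
      (k + 1) * Δ_[1] ^[k] (fun x : ℕ => ((x + 1 : ℕ) : R) ^ n) 0 := by
  rw [fwdDiff_iter_eq_sum_choose, fwdDiff_iter_eq_sum_choose, sum_range_succ', mul_sum]
  simp only [Nat.add_sub_add_right, cast_zero, ne_eq, add_eq_zero, one_ne_zero, and_false,
    not_false_eq_true, zero_pow, mul_zero, add_zero, cast_add, cast_one]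
  refine sum_congr rfl fun i _ => ?_
  have h := congrArg (Nat.cast : ℕ → R) (add_one_mul_choose_eq k i)
  push_cast at h
  linear_combination (-1) ^ (k - i) * ((i : R) + 1) ^ n * h.symm

theorem fwdDiff_iter_pow_eq_factorial_mul_stirlingSecond (n k : ℕ) :
    Δ_[1] ^[k] (fun x : ℕ => (x : R) ^ n) 0 = k ! * stirlingSecond n k := by
  induction n generalizing k with
  | zero =>
    cases k with
    | zero => simp
    | succ k => simp [Function.iterate_succ_apply, Function.iterate_fixed (fwdDiff_const _ _)]
  | succ n ih =>
    cases k with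
    | zero => simp
    | succ k =>
      have hshift : (fun x : ℕ => ((x + 1 : ℕ) : R) ^ n) =
          Δ_[1] (fun x : ℕ => (x : R) ^ n) + fun x : ℕ => (x : R) ^ n := by
        ext x; simp [fwdDiff]
      rw [fwdDiff_iter_succ_pow_succ, hshift, fwdDiff_iter_add, Pi.add_apply,
        ← Function.iterate_succ_apply, ih, ih, stirlingSecond_succ_succ]
      push_cast [factorial_succ]
      ring

theorem sum_sum_choose_mul_neg_one_pow_eq_mul (k1 k2 : ℕ) (f g : ℕ → R) :
    ∑ i ∈ range (k1 + 1), ∑ j ∈ range (k2 + 1),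
        ((k1.choose i * k2.choose j : ℕ) : R) * (-1) ^ (k1 + k2 - i - j) * (f i * g j) =
      (∑ i ∈ range (k1 + 1), (-1) ^ (k1 - i) * k1.choose i * f i) *
        ∑ j ∈ range (k2 + 1), (-1) ^ (k2 - j) * k2.choose j * g j := by
  rw [sum_mul_sum]
  refine sum_congr rfl fun i hi => sum_congr rfl fun j hj => ?_
  rw [show k1 + k2 - i - j = (k1 - i) + (k2 - j) by
    have := mem_range_succ_iff.mp hi; have := mem_range_succ_iff.mp hj; omega, pow_add]
  push_cast
  ring

theorem sum_sum_mul_add_add_pow (s t : Finset ℕ) (c : ℕ → ℕ → R) (l : ℕ) (x y z : R) :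
    ∑ i ∈ s, ∑ j ∈ t, c i j * ((i : R) * x + j * y + z) ^ l =
      ∑ a ∈ range (l + 1), ∑ b ∈ range (l + 1 - a),
        (l.choose a * (l - a).choose b : R) *
          (∑ i ∈ s, ∑ j ∈ t, c i j * ((i : R) ^ a * (j : R) ^ b)) *
            x ^ a * y ^ b * z ^ (l - a - b) := by
  simp_rw [add_add_pow, mul_sum, sum_mul]
  simp_rw [sum_sigma' (range (l + 1)) fun a => range (l + 1 - a)]
  simp_rw [sum_comm (s := t)]
  rw [sum_comm]
  refine sum_congr rfl fun _ _ => sum_congr rfl fun _ _ => sum_congr rfl fun _ _ => ?_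
  ring

theorem factorial_mul_factorial_mul_sum_stirlingSecond_eq_alt_sum (k1 k2 l : ℕ) (x y z : R) :
    ((k1 ! * k2 ! : ℕ) : R) * ∑ a ∈ range (l + 1), ∑ b ∈ range (l + 1 - a),
        ((l.choose a * (l - a).choose b * stirlingSecond a k1 * stirlingSecond b k2 : ℕ) : R) *
          x ^ a * y ^ b * z ^ (l - a - b) =
      ∑ i ∈ range (k1 + 1), ∑ j ∈ range (k2 + 1),
        ((k1.choose i * k2.choose j : ℕ) : R) * (-1) ^ (k1 + k2 - i - j) *
          ((i : R) * x + j * y + z) ^ l := by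
  rw [sum_sum_mul_add_add_pow
    (c := fun i j => ((k1.choose i * k2.choose j : ℕ) : R) * (-1) ^ (k1 + k2 - i - j))]
  simp only [sum_sum_choose_mul_neg_one_pow_eq_mul, ← fwdDiff_iter_eq_sum_choose,
    fwdDiff_iter_pow_eq_factorial_mul_stirlingSecond, mul_sum]
  refine sum_congr rfl fun _ _ => sum_congr rfl fun _ _ => ?_
  push_cast
  ring

end CommRing

theorem factorial_mul_Cpoly_eq_alt_sum (k1 k2 l : ℕ) :
    (MvPolynomial.C ((k1.factorial * k2.factorial : ℕ) : ℤ)) * Cpoly k1 k2 l =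
      ∑ i ∈ Finset.range (k1 + 1), ∑ j ∈ Finset.range (k2 + 1),
        (MvPolynomial.C ((k1.choose i * k2.choose j : ℕ) : ℤ))
          * (-1) ^ (k1 + k2 - i - j) * Apoly i j ^ l := by
  simp only [Cpoly, Apoly, map_natCast, stirling2_eq_stirlingSecond]
  exact factorial_mul_factorial_mul_sum_stirlingSecond_eq_alt_sum k1 k2 l _ _ _
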